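/- arXiv:1906.00752 — 4 statements merged into one kernel-verified Lean document; each statement's English description precedes it below -/
import Mathlib

section
/- For the uniform binary case (\ell = 2) with n = 2\nu + 1 odd, the probability generating function of S (as a Laurent polynomial in x) equals 2^{-n+1} \prod_{k=1}^{\nu} (x^k + x^{-k})^2. -/
/-!
Prepending a bit `y` to a binary word `b` of length `n` adds `n * y - |b|` to the Kendall score,
where `|b|` is the number of ones of `b`. Marking the ones by `t`, the generating function
`F_n(t) = ∑_b x ^ S(b) * t ^ |b|` therefore satisfies `F_{n+1}(t) = (1 + t * x ^ n) * F_n(t / x)`,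
whence `F_n(t) = ∏_{i<n} (1 + t * x ^ (n - 1 - 2 i))`. At `t = 1` and `n = 2ν + 1` the factors
pair up as `(1 + x ^ 2k) * (1 + x ^ -2k) = (x ^ k + x ^ -k) ^ 2`, leaving the middle factor `2`.
-/

open Finset

/-- Kendall score S = S⁺ - S⁻ of a finite sequence: S⁺ counts the pairs of positions in which
the earlier element exceeds the later one, S⁻ those in which the earlier element is smaller
(the paper's convention: S(0 1 1 2 0 2 1) = 5 - 11 = -6). -/
def kendallS {n : ℕ} {α : Type*} [LinearOrder α] (x : Fin n → α) : ℤ :=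
  ((Finset.univ.filter (fun p : Fin n × Fin n => p.2 < p.1 ∧ x p.1 < x p.2)).card : ℤ) -
  ((Finset.univ.filter (fun p : Fin n × Fin n => p.2 < p.1 ∧ x p.2 < x p.1)).card : ℤ)

lemma kendallS_eq_sum {n : ℕ} {α : Type*} [LinearOrder α] (x : Fin n → α) :
    kendallS x = ∑ p : Fin n × Fin n,
      (((if p.2 < p.1 ∧ x p.1 < x p.2 then 1 else 0) : ℤ)
        - ((if p.2 < p.1 ∧ x p.2 < x p.1 then 1 else 0) : ℤ)) := by
  simp [kendallS, sum_sub_distrib, sum_boole]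

lemma kendallS_cons {n : ℕ} {α : Type*} [LinearOrder α] (y : α) (b : Fin n → α) :
    kendallS (Fin.cons y b) = kendallS b +
      ∑ i, (((if b i < y then 1 else 0) : ℤ) - ((if y < b i then 1 else 0) : ℤ)) := by
  simp only [kendallS_eq_sum, Fintype.sum_prod_type, Fin.sum_univ_succ, Fin.cons_zero,
    Fin.cons_succ, Fin.not_lt_zero, Fin.succ_pos, Fin.succ_lt_succ_iff, false_and, if_false,
    true_and, lt_irrefl, sub_self, sum_const_zero, zero_add, sum_add_distrib]
  ring

lemma kendallS_cons_fin_two {n : ℕ} (y : Fin 2) (b : Fin n → Fin 2) :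
    kendallS (Fin.cons y b) = kendallS b + (n * y : ℕ) - (∑ i, (b i : ℕ) : ℕ) := by
  have sign_eq_sub : ∀ u v : Fin 2,
      ((if v < u then 1 else 0) : ℤ) - (if u < v then 1 else 0) = (u : ℕ) - (v : ℕ) := by
    decide
  simp only [kendallS_cons, sign_eq_sub, sum_sub_distrib, sum_const, card_univ,
    Fintype.card_fin, nsmul_eq_mul]
  push_cast
  ring

theorem sum_zpow_kendallS_mul_pow {K : Type*} [Field K] {x : K} (hx : x ≠ 0) (n : ℕ) (t : K) :
    ∑ b : Fin n → Fin 2, x ^ kendallS b * t ^ (∑ i, (b i : ℕ)) =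
      ∏ i ∈ range n, (1 + t * x ^ ((n : ℤ) - 1 - 2 * i)) := by
  induction n generalizing t with
  | zero => simp [kendallS]
  | succ n ih =>
    have term_eq : ∀ (y : Fin 2) (b : Fin n → Fin 2),
        x ^ kendallS (Fin.cons y b : Fin (n + 1) → Fin 2) *
            t ^ (∑ i, ((Fin.cons y b : Fin (n + 1) → Fin 2) i : ℕ)) =
          (t * x ^ n) ^ (y : ℕ) * (x ^ kendallS b * (t * x⁻¹) ^ (∑ i, (b i : ℕ))) := by
      intro y b
      rw [kendallS_cons_fin_two, Fin.sum_univ_succ]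
      simp only [Fin.cons_zero, Fin.cons_succ]
      rw [zpow_sub₀ hx, zpow_add₀ hx]
      simp only [zpow_natCast, mul_pow, inv_pow, pow_add, pow_mul]
      field_simp
    rw [← (Fin.consEquiv fun _ => Fin 2).sum_comp, Fintype.sum_prod_type]
    simp only [Fin.consEquiv, Equiv.coe_fn_mk, term_eq, ← mul_sum, ih, Fin.sum_univ_two, ← add_mul]
    rw [prod_range_succ', mul_comm]
    congr 1
    · refine prod_congr rfl fun i _ => ?_
      rw [show ((n + 1 : ℕ) : ℤ) - 1 - 2 * (i + 1 : ℕ) = (n - 1 - 2 * i) - 1 by push_cast; ring,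
        zpow_sub_one₀ hx]
      ring
    · simp

lemma prod_range_two_mul_add_one_eq {M : Type*} [CommMonoid M] (f : ℤ → M) (ν : ℕ) :
    ∏ i ∈ range (2 * ν + 1), f (ν - i) = f 0 * ∏ k ∈ Icc 1 ν, (f k * f (-k)) := by
  induction ν with
  | zero => simp
  | succ ν ih =>
    rw [show 2 * (ν + 1) + 1 = 2 * ν + 1 + 1 + 1 by ring, prod_range_succ, prod_range_succ',
      prod_Icc_succ_top (by omega), ← mul_assoc, ← ih]
    push_cast
    simp only [add_sub_add_right_eq_sub, sub_zero]
    rw [show (ν : ℤ) + 1 - (2 * ν + 2) = -(ν + 1) by ring, mul_assoc]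

lemma one_add_zpow_two_mul_mul {K : Type*} [Field K] {x : K} (hx : x ≠ 0) (k : ℤ) :
    (1 + x ^ (2 * k)) * (1 + x ^ (2 * -k)) = (x ^ k + x ^ (-k)) ^ 2 := by
  have hxk : x ^ k ≠ 0 := zpow_ne_zero k hx
  rw [mul_neg, zpow_neg, zpow_neg, zpow_mul', zpow_two]
  field_simp
  ring

/-- PGF of S for n = 2ν+1 fair coin flips: f(x) = 2^{-n+1} ∏ₖ (x^k + x^{-k})². -/
theorem kendall_pgf_odd (ν : ℕ) (x : ℝ) (hx : x ≠ 0) :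
    ∑ j : Fin (2 * ν + 1) → Fin 2, (1 / 2 ^ (2 * ν + 1) : ℝ) * x ^ kendallS j
      = 2 ^ (-(2 * ν + 1 : ℤ) + 1)
        * ∏ k ∈ Finset.Icc 1 ν, (x ^ (k : ℤ) + x ^ (-(k : ℤ))) ^ 2 := by
  have pgf := sum_zpow_kendallS_mul_pow hx (2 * ν + 1) 1
  simp only [one_pow, mul_one, one_mul] at pgf
  have factor_eq : ∀ i ∈ range (2 * ν + 1),
      1 + x ^ (((2 * ν + 1 : ℕ) : ℤ) - 1 - 2 * i) = 1 + x ^ (2 * ((ν : ℤ) - i)) := by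
    intro i _
    push_cast
    ring_nf
  rw [← mul_sum, pgf, prod_congr rfl factor_eq,
    prod_range_two_mul_add_one_eq (fun j => 1 + x ^ (2 * j))]
  simp only [one_add_zpow_two_mul_mul hx, mul_zero, zpow_zero]
  rw [show -(2 * ν + 1 : ℤ) + 1 = -(2 * ν : ℕ) by push_cast; ring, zpow_neg, zpow_natCast]
  field_simp
  ring
end

section
/- In the binary case \ell = 2 with i.i.d. fair coin flips, the fourth moment of S equals n(n^2-1)(5n^3 - 6n^2 - 5n + 14)/240. -/
/-!
For a binary sequence every pair of positions `j < i` contributes `x j - x i` to the Kendall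
score, so `S` is linear in the sequence: with the signs `ε i = 2 x i - 1`, which are independent
fair `±1` variables, `S = ∑ i, c i * ε i` where `c i = (n - 1) / 2 - i`. Expanding the fourth
power, only the terms `ε i ^ 4` and `ε i ^ 2 * ε j ^ 2` survive averaging, giving
`E[S⁴] = 3 (∑ c i ^ 2) ^ 2 - 2 ∑ c i ^ 4`; the power sums of the arithmetic progression `c` are
polynomials in `n`.
-/

open Finset

section Spin

variable {R : Type*} [CommRing R] {n : ℕ}

def spin : Fin 2 → R := ![-1, 1]

@[simp] lemma spin_zero : (spin 0 : R) = -1 := rfl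
@[simp] lemma spin_one : (spin 1 : R) = 1 := rfl

def spinSum (g : Fin n → R) (x : Fin n → Fin 2) : R := ∑ i, g i * spin (x i)

lemma spinSum_cons (g : Fin (n + 1) → R) (a : Fin 2) (y : Fin n → Fin 2) :
    spinSum g (Fin.cons a y) = g 0 * spin a + spinSum (Fin.tail g) y := by
  simp [spinSum, Fin.sum_univ_succ, Fin.tail]

lemma sum_fun_fin_succ {β M : Type*} [Fintype β] [AddCommMonoid M]
    (F : (Fin (n + 1) → β) → M) : ∑ x, F x = ∑ a, ∑ y : Fin n → β, F (Fin.cons a y) := by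
  rw [← (Fin.consEquiv fun _ => β).sum_comp, Fintype.sum_prod_type]
  rfl

lemma sum_spinSum_succ {M : Type*} [AddCommMonoid M] (g : Fin (n + 1) → R) (φ : R → M) :
    ∑ x, φ (spinSum g x)
      = ∑ y, (φ (spinSum (Fin.tail g) y - g 0) + φ (spinSum (Fin.tail g) y + g 0)) := by
  rw [sum_fun_fin_succ, Fin.sum_univ_two, ← sum_add_distrib]
  simp [spinSum_cons, sub_eq_neg_add, add_comm]

lemma sum_spinSum_sq (g : Fin n → R) :
    ∑ x, spinSum g x ^ 2 = 2 ^ n * ∑ i, g i ^ 2 := by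
  induction n with
  | zero => simp [spinSum]
  | succ n ih =>
    have h (s : R) : (s - g 0) ^ 2 + (s + g 0) ^ 2 = 2 * s ^ 2 + 2 * g 0 ^ 2 := by ring
    simp_rw [sum_spinSum_succ g (· ^ 2), h]
    rw [sum_add_distrib, ← mul_sum, ih, sum_const, card_univ, Fintype.card_fun, Fin.sum_univ_succ]
    simp only [Fin.tail, Fintype.card_fin, nsmul_eq_mul, Nat.cast_pow, Nat.cast_ofNat]
    ring

lemma sum_spinSum_pow_four (g : Fin n → R) :
    ∑ x, spinSum g x ^ 4 = 2 ^ n * (3 * (∑ i, g i ^ 2) ^ 2 - 2 * ∑ i, g i ^ 4) := by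
  induction n with
  | zero => simp [spinSum]
  | succ n ih =>
    have h (s : R) : (s - g 0) ^ 4 + (s + g 0) ^ 4
        = 2 * s ^ 4 + 12 * g 0 ^ 2 * s ^ 2 + 2 * g 0 ^ 4 := by ring
    simp_rw [sum_spinSum_succ g (· ^ 4), h]
    rw [sum_add_distrib, sum_add_distrib, ← mul_sum, ← mul_sum, ih, sum_spinSum_sq, sum_const,
      card_univ, Fintype.card_fun, Fin.sum_univ_succ, Fin.sum_univ_succ (f := fun i => g i ^ 4)]
    simp only [Fin.tail, Fintype.card_fin, nsmul_eq_mul, Nat.cast_pow, Nat.cast_ofNat]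
    ring

end Spin

lemma sum_sum_Iio_sub {R : Type*} [CommRing R] {n : ℕ} (f : Fin n → R) :
    ∑ i, ∑ j ∈ Iio i, (f j - f i) = ∑ i : Fin n, ((n : R) - 1 - 2 * (i : ℕ)) * f i := by
  have hlow : ∑ i, ∑ j ∈ Iio i, f j = ∑ j : Fin n, ((n : R) - 1 - (j : ℕ)) * f j := by
    rw [sum_comm' (t' := univ) (s' := fun j => Ioi j) (fun i j => by simp)]
    refine sum_congr rfl fun j _ => ?_
    have hj := j.isLt
    rw [sum_const, Fin.card_Ioi, nsmul_eq_mul, Nat.cast_sub (by omega), Nat.cast_sub (by omega)]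
    simp
  simp_rw [sum_sub_distrib, hlow, sum_const, Fin.card_Iio, nsmul_eq_mul, ← sum_sub_distrib]
  exact sum_congr rfl fun i _ => by ring

lemma ite_lt_sub_ite_lt (a b : Fin 2) :
    ((if a < b then 1 else 0) : ℚ) - (if b < a then 1 else 0) = (spin b - spin a : ℚ) / 2 := by
  fin_cases a <;> fin_cases b <;> norm_num

lemma kendallS_fin_two {n : ℕ} (x : Fin n → Fin 2) :
    (kendallS x : ℚ) = spinSum (fun i : Fin n => ((n : ℚ) - 1) / 2 - (i : ℕ)) x := by
  have hpairs : (kendallS x : ℚ) = ∑ i, ∑ j ∈ Iio i, (spin (x j) - spin (x i)) / 2 := by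
    simp only [kendallS, card_filter]
    push_cast
    rw [← sum_sub_distrib, Fintype.sum_prod_type]
    refine sum_congr rfl fun i _ => ?_
    rw [← filter_gt_eq_Iio, sum_filter]
    refine sum_congr rfl fun j _ => ?_
    by_cases hji : j < i <;> simp [hji, ite_lt_sub_ite_lt]
  simp_rw [hpairs, sub_div, sum_sum_Iio_sub fun i => (spin (x i) : ℚ) / 2, spinSum]
  exact sum_congr rfl fun i _ => by ring

lemma sum_range_sub_sq (a : ℚ) (n : ℕ) :
    ∑ i ∈ range n, (a - i) ^ 2 = n * a ^ 2 - n * (n - 1) * a + n * (n - 1) * (2 * n - 1) / 6 := by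
  induction n with
  | zero => simp
  | succ n ih => rw [sum_range_succ, ih]; push_cast; ring

lemma sum_range_sub_pow_four (a : ℚ) (n : ℕ) :
    ∑ i ∈ range n, (a - i) ^ 4 = n * a ^ 4 - 2 * n * (n - 1) * a ^ 3
      + n * (n - 1) * (2 * n - 1) * a ^ 2 - n ^ 2 * (n - 1) ^ 2 * a
      + n * (n - 1) * (2 * n - 1) * (3 * n ^ 2 - 3 * n - 1) / 30 := by
  induction n with
  | zero => simp
  | succ n ih => rw [sum_range_succ, ih]; push_cast; ring

/-- Binary uniform case: μ₄(n) = E[S⁴] = n(n²-1)(5n³-6n²-5n+14)/240. -/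
theorem kendall_fourth_moment_binary (n : ℕ) :
    (∑ x : Fin n → Fin 2, (kendallS x : ℚ) ^ 4) / 2 ^ n
    = (n : ℚ) * ((n : ℚ) ^ 2 - 1)
        * (5 * (n : ℚ) ^ 3 - 6 * (n : ℚ) ^ 2 - 5 * (n : ℚ) + 14) / 240 := by
  simp_rw [kendallS_fin_two, sum_spinSum_pow_four,
    Fin.sum_univ_eq_sum_range (fun i => (((n : ℚ) - 1) / 2 - i) ^ 2),
    Fin.sum_univ_eq_sum_range (fun i => (((n : ℚ) - 1) / 2 - i) ^ 4),
    sum_range_sub_sq, sum_range_sub_pow_four]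
  field_simp
  ring
end

section
/- For biased binary sequences with n = 2\nu even, the probability generating function of S equals \prod_{k=1}^{\nu} (pq x^{1-2k} + p^2 + q^2 + pq x^{2k-1}). -/
open Finset

/-! For a binary sequence the Kendall score is linear, `S = ∑ₖ (n - 1 - 2k) xₖ`, since a pair
`j < i` contributes `xⱼ - xᵢ`. The generating function therefore factors over the independent
coordinates as `∏ₖ (p + q y^(n-1-2k))`. For `n = 2ν` the exponents are `±1, ±3, …, ±(2ν-1)`,
and pairing `m` with `-m` gives `(p + q y^m)(p + q y^(-m)) = pq y^(-m) + p² + q² + pq y^m`. -/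

lemma kendallS_fin_two_eq_sum_pairs {n : ℕ} (x : Fin n → Fin 2) :
    kendallS x = ∑ p ∈ univ.filter (fun p : Fin n × Fin n => p.2 < p.1),
      (((x p.2 : ℕ) : ℤ) - (x p.1 : ℕ)) := by
  unfold kendallS
  rw [← filter_filter, ← filter_filter, card_filter, card_filter]
  push_cast
  rw [← sum_sub_distrib]
  refine sum_congr rfl fun p _ => ?_
  generalize x p.1 = a
  generalize x p.2 = b
  fin_cases a <;> fin_cases b <;> rfl

lemma sum_filter_lt_sub {R : Type*} [CommRing R] {n : ℕ} (f : Fin n → R) :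
    ∑ p ∈ univ.filter (fun p : Fin n × Fin n => p.2 < p.1), (f p.2 - f p.1)
      = ∑ k, ((n : R) - 1 - 2 * k) * f k := by
  have earlier : ∑ p ∈ univ.filter (fun p : Fin n × Fin n => p.2 < p.1), f p.2
      = ∑ k, ((n : R) - 1 - k) * f k := by
    rw [sum_filter, Fintype.sum_prod_type_right]
    dsimp only
    refine sum_congr rfl fun k _ => ?_
    have := k.isLt
    rw [← sum_filter, filter_lt_eq_Ioi, sum_const, Fin.card_Ioi, nsmul_eq_mul,
      Nat.cast_sub (by omega), Nat.cast_sub (by omega)]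
    simp
  have later : ∑ p ∈ univ.filter (fun p : Fin n × Fin n => p.2 < p.1), f p.1
      = ∑ k : Fin n, ((k : ℕ) : R) * f k := by
    rw [sum_filter, Fintype.sum_prod_type]
    dsimp only
    refine sum_congr rfl fun k _ => ?_
    rw [← sum_filter, filter_gt_eq_Iio, sum_const, Fin.card_Iio, nsmul_eq_mul]
  rw [sum_sub_distrib, earlier, later, ← sum_sub_distrib]
  exact sum_congr rfl fun k _ => by ring

lemma kendallS_fin_two_eq_sum {n : ℕ} (x : Fin n → Fin 2) :
    kendallS x = ∑ k, ((n : ℤ) - 1 - 2 * k) * (x k : ℕ) := by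
  rw [kendallS_fin_two_eq_sum_pairs, sum_filter_lt_sub (fun k => ((x k : ℕ) : ℤ))]

lemma zpow_sum₀ {G ι : Type*} [CommGroupWithZero G] {a : G} (ha : a ≠ 0) (s : Finset ι)
    (f : ι → ℤ) : a ^ (∑ i ∈ s, f i) = ∏ i ∈ s, a ^ f i := by
  classical
  induction s using Finset.induction_on with
  | empty => simp
  | insert i s hi ih => rw [sum_insert hi, prod_insert hi, zpow_add₀ ha, ih]

lemma sum_prod_mul_zpow_sum {K : Type*} [Semifield K] {n : ℕ} (p q : K) {y : K} (hy : y ≠ 0)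
    (e : Fin n → ℤ) :
    ∑ x : Fin n → Fin 2, (∏ k, if x k = 0 then p else q) * y ^ (∑ k, e k * (x k : ℕ))
      = ∏ k, (p + q * y ^ e k) := by
  simp_rw [zpow_sum₀ hy, ← prod_mul_distrib]
  rw [← Fintype.prod_sum fun k (v : Fin 2) => (if v = 0 then p else q) * y ^ (e k * (v : ℕ))]
  refine prod_congr rfl fun k _ => ?_
  simp [Fin.sum_univ_two]

lemma prod_fin_two_mul_eq_prod_Icc_odd {M : Type*} [CommMonoid M] (g : ℤ → M) (ν : ℕ) :
    ∏ k : Fin (2 * ν), g (((2 * ν : ℕ) : ℤ) - 1 - 2 * k)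
      = ∏ k ∈ Icc 1 ν, g (2 * k - 1) * g (-(2 * k - 1)) := by
  rw [Fin.prod_univ_eq_prod_range (fun k : ℕ => g (((2 * ν : ℕ) : ℤ) - 1 - 2 * k)), two_mul,
    prod_range_add, ← prod_range_reflect, ← prod_mul_distrib, ← Ico_add_one_right_eq_Icc,
    prod_Ico_eq_prod_range, add_tsub_cancel_right]
  refine prod_congr rfl fun k hk => ?_
  have hk : k < ν := mem_range.mp hk
  congr 2 <;>
    push_cast [Nat.cast_sub (show k ≤ ν - 1 by omega), Nat.cast_sub (show 1 ≤ ν by omega)] <;>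
    ring

lemma add_mul_zpow_mul_add_mul_zpow_neg {K : Type*} [Field K] (p q : K) {y : K} (hy : y ≠ 0)
    (m : ℤ) :
    (p + q * y ^ m) * (p + q * y ^ (-m)) = p * q * y ^ (-m) + p ^ 2 + q ^ 2 + p * q * y ^ m := by
  have h : y ^ m * y ^ (-m) = 1 := by rw [← zpow_add₀ hy, add_neg_cancel, zpow_zero]
  linear_combination q ^ 2 * h

theorem kendall_pgf_biased_even_general (ν : ℕ) (p q : ℝ) (y : ℝ) (hy : y ≠ 0) :
    ∑ x : Fin (2 * ν) → Fin 2,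
        (∏ k, if x k = 0 then p else q) * y ^ kendallS x
      = ∏ k ∈ Finset.Icc 1 ν,
          (p * q * y ^ (1 - 2 * (k : ℤ)) + p ^ 2 + q ^ 2 + p * q * y ^ (2 * (k : ℤ) - 1)) := by
  simp_rw [kendallS_fin_two_eq_sum]
  rw [sum_prod_mul_zpow_sum p q hy, prod_fin_two_mul_eq_prod_Icc_odd (fun m => p + q * y ^ m)]
  refine prod_congr rfl fun k _ => ?_
  rw [add_mul_zpow_mul_add_mul_zpow_neg p q hy, neg_sub]

/-- Biased binary case, n = 2ν even: the PGF of S is ∏ₖ (pq x^{1-2k} + p² + q² + pq x^{2k-1}). -/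
theorem kendall_pgf_biased_even (ν : ℕ) (p q : ℝ) (hp : 0 ≤ p) (hq : 0 ≤ q)
    (hpq : p + q = 1) (y : ℝ) (hy : y ≠ 0) :
    ∑ x : Fin (2 * ν) → Fin 2,
        (∏ k, if x k = 0 then p else q) * y ^ kendallS x
      = ∏ k ∈ Finset.Icc 1 ν,
          (p * q * y ^ (1 - 2 * (k : ℤ)) + p ^ 2 + q ^ 2 + p * q * y ^ (2 * (k : ℤ) - 1)) :=
  kendall_pgf_biased_even_general ν p q y hy
end

section
/- For biased binary sequences (P(0)=p, P(1)=q, p+q=1, independent), the variance of the Kendall score S equals n(n^2-1) pq / 3. -/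
/-! On binary strings a pair of positions `j < i` contributes `x j - x i` to the Kendall score,
so `S = ∑ k, c k * x k` with `c k = n - 1 - 2k` is a linear form in independent Bernoulli(`q`)
variables. Its variance is `∑ k, c k ^ 2` times the variance `q - q ^ 2 = p q` of one coordinate,
and `∑ k < n, (n - 1 - 2k) ^ 2 = n (n ^ 2 - 1) / 3`. -/

open Finset

section ProductWeights

variable {ι α R : Type*} [Fintype ι] [DecidableEq ι] [Fintype α] [CommRing R]

def prodExpect (μ : α → R) (F : (ι → α) → R) : R := ∑ x, (∏ i, μ (x i)) * F x

theorem prodExpect_sum {κ : Type*} (s : Finset κ) (μ : α → R) (F : κ → (ι → α) → R) :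
    prodExpect μ (fun x => ∑ k ∈ s, F k x) = ∑ k ∈ s, prodExpect μ (F k) := by
  simp only [prodExpect, mul_sum]
  exact sum_comm

theorem prodExpect_const_mul (μ : α → R) (c : R) (F : (ι → α) → R) :
    prodExpect μ (fun x => c * F x) = c * prodExpect μ F := by
  simp only [prodExpect, mul_sum, mul_left_comm]

theorem prodExpect_prod (μ : α → R) (h : ι → α → R) :
    prodExpect μ (fun x => ∏ i, h i (x i)) = ∏ i, ∑ a, μ a * h i a := by
  simp only [prodExpect, ← prod_mul_distrib]
  exact (Fintype.prod_sum fun i a => μ a * h i a).symm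

variable {μ : α → R}

theorem prodExpect_apply (hμ : ∑ a, μ a = 1) (f : α → R) (k : ι) :
    prodExpect μ (fun x => f (x k)) = ∑ a, μ a * f a := by
  have hf : ∀ x : ι → α, f (x k) = ∏ i, if i = k then f (x i) else 1 := by simp
  have hexp : ∀ i, (∑ a, μ a * if i = k then f a else 1)
      = if i = k then ∑ a, μ a * f a else 1 := by
    intro i
    split_ifs <;> simp [hμ]
  simp only [hf, prodExpect_prod (h := fun i a => if i = k then f a else 1), hexp]
  simp only [prod_ite_eq', mem_univ, if_true]

theorem prodExpect_apply_mul_apply (hμ : ∑ a, μ a = 1) (f g : α → R) {k l : ι} (hkl : k ≠ l) :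
    prodExpect μ (fun x => f (x k) * g (x l)) = (∑ a, μ a * f a) * ∑ a, μ a * g a := by
  have hfg : ∀ x : ι → α, f (x k) * g (x l)
      = ∏ i, (if i = k then f (x i) else 1) * (if i = l then g (x i) else 1) := by
    simp only [prod_mul_distrib, prod_ite_eq', mem_univ, if_true, implies_true]
  have hexp : ∀ i, (∑ a, μ a * ((if i = k then f a else 1) * (if i = l then g a else 1)))
      = (if i = k then ∑ a, μ a * f a else 1) * (if i = l then ∑ a, μ a * g a else 1) := by
    intro i
    split_ifs with hik hil <;> simp_all
  simp only [hfg,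
    prodExpect_prod (h := fun i a => (if i = k then f a else 1) * (if i = l then g a else 1)), hexp]
  simp only [prod_mul_distrib, prod_ite_eq', mem_univ, if_true]

theorem prodExpect_linear_sq_sub_sq (hμ : ∑ a, μ a = 1) (c : ι → R) (f : α → R) :
    prodExpect μ (fun x => (∑ k, c k * f (x k)) ^ 2)
        - prodExpect μ (fun x => ∑ k, c k * f (x k)) ^ 2
      = (∑ k, c k ^ 2) * (∑ a, μ a * f a ^ 2 - (∑ a, μ a * f a) ^ 2) := by
  set m := ∑ a, μ a * f a
  set s := ∑ a, μ a * f a ^ 2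
  have hpair : ∀ k l : ι, prodExpect μ (fun x => f (x k) * f (x l))
      = m ^ 2 + if k = l then s - m ^ 2 else 0 := by
    intro k l
    rcases eq_or_ne k l with rfl | hkl
    · simp only [← sq, if_true]
      rw [prodExpect_apply hμ (fun a => f a ^ 2)]
      ring
    · rw [prodExpect_apply_mul_apply hμ f f hkl, if_neg hkl]
      ring
  have hsq : ∀ x : ι → α, (∑ k, c k * f (x k)) ^ 2
      = ∑ k, ∑ l, c k * c l * (f (x k) * f (x l)) := by
    intro x
    simp only [sq, sum_mul_sum, mul_mul_mul_comm]
  simp only [hsq, prodExpect_sum, prodExpect_const_mul, hpair, prodExpect_apply hμ]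
  simp only [mul_add, sum_add_distrib, mul_ite, mul_zero, sum_ite_eq, mem_univ, if_true,
    ← sum_mul, ← mul_sum]
  simp only [m, ← sq]
  ring

end ProductWeights

section KendallScore

variable {n : ℕ}

theorem kendallS_eq_sum_ite {α : Type*} [LinearOrder α] (x : Fin n → α) :
    kendallS x = ∑ p ∈ univ.filter (fun p : Fin n × Fin n => p.2 < p.1),
      ((if x p.1 < x p.2 then 1 else 0) - (if x p.2 < x p.1 then 1 else 0)) := by
  rw [kendallS, ← filter_filter, ← filter_filter, card_filter, card_filter, sum_sub_distrib]
  push_cast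
  rfl

theorem sum_filter_snd_lt_fst_sub {R : Type*} [CommRing R] (g : Fin n → R) :
    ∑ p ∈ univ.filter (fun p : Fin n × Fin n => p.2 < p.1), (g p.2 - g p.1)
      = ∑ k : Fin n, ((n : R) - 1 - 2 * (k : ℕ)) * g k := by
  have hearlier : ∑ p ∈ univ.filter (fun p : Fin n × Fin n => p.2 < p.1), g p.2
      = ∑ k : Fin n, ((n : R) - 1 - (k : ℕ)) * g k := by
    rw [sum_filter, Fintype.sum_prod_type, sum_comm]
    refine sum_congr rfl fun k _ => ?_
    dsimp only
    have hk := k.isLt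
    rw [← sum_filter, filter_lt_eq_Ioi, sum_const, Fin.card_Ioi, nsmul_eq_mul,
      Nat.cast_sub (by omega), Nat.cast_sub (by omega), Nat.cast_one]
  have hlater : ∑ p ∈ univ.filter (fun p : Fin n × Fin n => p.2 < p.1), g p.1
      = ∑ k : Fin n, ((k : ℕ) : R) * g k := by
    rw [sum_filter, Fintype.sum_prod_type]
    refine sum_congr rfl fun k _ => ?_
    dsimp only
    rw [← sum_filter, filter_gt_eq_Iio, sum_const, Fin.card_Iio, nsmul_eq_mul]
  rw [sum_sub_distrib, hearlier, hlater, ← sum_sub_distrib]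
  exact sum_congr rfl fun k _ => by ring

theorem kendallS_fin_two_s16 (x : Fin n → Fin 2) :
    kendallS x = ∑ k : Fin n, ((n : ℤ) - 1 - 2 * (k : ℕ)) * (x k : ℕ) := by
  have hbinary : ∀ a b : Fin 2,
      ((if a < b then 1 else 0 : ℤ) - if b < a then 1 else 0) = (b : ℕ) - (a : ℕ) := by
    decide
  rw [kendallS_eq_sum_ite, ← sum_filter_snd_lt_fst_sub]
  exact sum_congr rfl fun p _ => hbinary (x p.1) (x p.2)

end KendallScore

theorem three_mul_sum_range_sub_two_mul_sq {R : Type*} [CommRing R] (a : R) (m : ℕ) :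
    3 * ∑ k ∈ range m, (a - 2 * k) ^ 2
      = m * (3 * a ^ 2 - 6 * a * (m - 1) + 2 * (m - 1) * (2 * m - 1)) := by
  induction m with
  | zero => simp
  | succ m ih =>
    rw [sum_range_succ, mul_add, ih]
    push_cast
    ring

theorem three_mul_sum_kendall_coeff_sq {R : Type*} [CommRing R] (n : ℕ) :
    3 * ∑ k : Fin n, ((n : R) - 1 - 2 * (k : ℕ)) ^ 2 = n * ((n : R) ^ 2 - 1) := by
  rw [Fin.sum_univ_eq_sum_range (fun k => ((n : R) - 1 - 2 * k) ^ 2),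
    three_mul_sum_range_sub_two_mul_sq]
  ring

theorem kendall_variance_biased_general (n : ℕ) (p q : ℝ)
    (hpq : p + q = 1) :
    (∑ x : Fin n → Fin 2, (∏ k, if x k = 0 then p else q) * (kendallS x : ℝ) ^ 2)
      - (∑ x : Fin n → Fin 2, (∏ k, if x k = 0 then p else q) * (kendallS x : ℝ)) ^ 2
    = (n : ℝ) * ((n : ℝ) ^ 2 - 1) * p * q / 3 := by
  set μ : Fin 2 → ℝ := fun a => if a = 0 then p else q
  have hμ : ∑ a, μ a = 1 := by simpa [μ, Fin.sum_univ_two] using hpq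
  have hS : ∀ x : Fin n → Fin 2,
      (kendallS x : ℝ) = ∑ k : Fin n, ((n : ℝ) - 1 - 2 * (k : ℕ)) * ((x k : ℕ) : ℝ) := fun x => by
    rw [kendallS_fin_two_s16]
    push_cast
    rfl
  change prodExpect μ (fun x => (kendallS x : ℝ) ^ 2)
    - prodExpect μ (fun x => (kendallS x : ℝ)) ^ 2 = _
  simp only [hS]
  have hmean : ∑ a, μ a * ((a : ℕ) : ℝ) = q := by simp [μ, Fin.sum_univ_two]
  have hsecond : ∑ a, μ a * ((a : ℕ) : ℝ) ^ 2 = q := by simp [μ, Fin.sum_univ_two]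
  have hcoeff := three_mul_sum_kendall_coeff_sq (R := ℝ) n
  rw [prodExpect_linear_sq_sub_sq hμ _ fun a => ((a : ℕ) : ℝ), hmean, hsecond]
  linear_combination (p * q / 3) * hcoeff
    - (∑ k : Fin n, ((n : ℝ) - 1 - 2 * (k : ℕ)) ^ 2) * q * hpq

/-- Biased binary case: Var(S) = n(n²-1)pq/3. -/
theorem kendall_variance_biased (n : ℕ) (p q : ℝ) (hp : 0 ≤ p) (hq : 0 ≤ q)
    (hpq : p + q = 1) :
    (∑ x : Fin n → Fin 2, (∏ k, if x k = 0 then p else q) * (kendallS x : ℝ) ^ 2)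
      - (∑ x : Fin n → Fin 2, (∏ k, if x k = 0 then p else q) * (kendallS x : ℝ)) ^ 2
    = (n : ℝ) * ((n : ℝ) ^ 2 - 1) * p * q / 3 :=
  kendall_variance_biased_general n p q hpq
end
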